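/- Heap tracking: (1) if 𝒞[·] ⊢ ℋ and l ∉ dom ℋ, then 𝒞[l:[m]] ⊢ ℋ ∪ {l ↦ (0, m, ε)}; (2) if 𝒞[l:[m']] ⊢ ℋ ∪ {l ↦ (n, m₀, m)} and m₁⊙m₂ ≤ m', then 𝒞[l:[m₁], l:[m₂]] ⊢ ℋ ∪ {l ↦ (n+1, m₀, m)}; (3) if (l:[m'] , C) ⊢ ℋ ∪ {l ↦ (n, m₀, m)} and m₁⊙m₂ ≤ m', then (l:[m₂] , C) ⊢ ℋ ∪ {l ↦ (n, m₀, m⊙m₁)}; (4) if 𝒞[l:[m']] ⊢ ℋ ∪ {l ↦ (n+1, m₀, m)} and ε ≤ m', then 𝒞[·] ⊢ ℋ ∪ {l ↦ (n, m₀, m)}; (5) if 𝒞[l:[m']] ⊢ ℋ ∪ {l ↦ (0, m₀, m)} and l ∉ dom ℋ, then 𝒞[·] ⊢ ℋ. -/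

import Mathlib

set_option autoImplicit false
set_option linter.unusedVariables false

namespace LawOrder

/-! ## Graph representations -/

structure Graph (B : Type) where
  n : ℕ
  label : ℕ → B
  edge : ℕ → ℕ → Prop
  edge_lt : ∀ i j, edge i j → i < n ∧ j < n

namespace Graph

variable {B : Type}

/-- The edge relation is acyclic. -/
def Acyclic (G : Graph B) : Prop := ∀ i, ¬ Relation.TransGen G.edge i i

/-- The empty graph representation. -/
def zero (B : Type) [Inhabited B] : Graph B :=
  ⟨0, fun _ => default, fun _ _ => False, fun _ _ h => h.elim⟩

/-- Union of two graph representations: disjoint union, second part shifted. -/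
def union (G₁ G₂ : Graph B) : Graph B where
  n := G₁.n + G₂.n
  label := fun i => if i < G₁.n then G₁.label i else G₂.label (i - G₁.n)
  edge := fun i j =>
    G₁.edge i j ∨ (G₁.n ≤ i ∧ G₁.n ≤ j ∧ G₂.edge (i - G₁.n) (j - G₁.n))
  edge_lt := by
    intro i j h
    rcases h with h | ⟨hi, hj, h⟩
    · have := G₁.edge_lt i j h; omega
    · have := G₂.edge_lt _ _ h; omega

/-- Join of two graph representations: union plus all edges from the first
    part to the second part. -/
def join (G₁ G₂ : Graph B) : Graph B where
  n := G₁.n + G₂.n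
  label := fun i => if i < G₁.n then G₁.label i else G₂.label (i - G₁.n)
  edge := fun i j =>
    G₁.edge i j ∨ (G₁.n ≤ i ∧ G₁.n ≤ j ∧ G₂.edge (i - G₁.n) (j - G₁.n)) ∨
      (i < G₁.n ∧ G₁.n ≤ j ∧ j < G₁.n + G₂.n)
  edge_lt := by
    intro i j h
    rcases h with h | ⟨hi, hj, h⟩ | ⟨hi, hj₁, hj₂⟩
    · have := G₁.edge_lt i j h; omega
    · have := G₂.edge_lt _ _ h; omega
    · omega

/-- Isomorphism of graph representations. -/
def Iso (G₁ G₂ : Graph B) : Prop :=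
  G₁.n = G₂.n ∧ ∃ f : Fin G₁.n → Fin G₁.n, Function.Bijective f ∧
    (∀ i j : Fin G₁.n, G₁.edge (f i).val (f j).val ↔ G₂.edge i.val j.val) ∧
    (∀ i : Fin G₁.n, G₁.label (f i).val = G₂.label i.val)

/-- `G₁` is a spanning graph representation of `G₂`: same vertices and labels,
    and the edges of `G₁` are contained in those of `G₂`. -/
def Spanning (G₁ G₂ : Graph B) : Prop :=
  G₁.n = G₂.n ∧ (∀ i, i < G₁.n → G₁.label i = G₂.label i) ∧
    ∀ i j, G₁.edge i j → G₂.edge i j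

/-- `f` is a topological ordering of `G`: `f` enumerates the vertices so that
    edges always point forward. -/
def IsTopOrder (G : Graph B) (f : Equiv.Perm (Fin G.n)) : Prop :=
  ∀ i j : Fin G.n, G.edge i.val j.val → f.symm i < f.symm j

/-- `G` has exactly one topological ordering. -/
def Traceable (G : Graph B) : Prop :=
  ∃! f : Equiv.Perm (Fin G.n), G.IsTopOrder f

/-- The identity enumeration is a topological ordering: all edges increase. -/
def TopOrdered (G : Graph B) : Prop := ∀ i j, G.edge i j → i < j

/-- `k` is a union cut of `G`: no edge crosses from below `k` to `k` or above. -/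
def UnionCut (G : Graph B) (k : ℕ) : Prop :=
  0 < k ∧ k < G.n ∧ ∀ i j, i < k → k ≤ j → ¬ G.edge i j

/-- `k` is a join cut of `G`: every pair crossing from below `k` to `k` or
    above (within range) is an edge. -/
def JoinCut (G : Graph B) (k : ℕ) : Prop :=
  0 < k ∧ k < G.n ∧ ∀ i j, i < k → k ≤ j → j < G.n → G.edge i j

/-- Lower part of the index cut at `k`. -/
def cutLo (G : Graph B) (k : ℕ) : Graph B where
  n := k
  label := G.label
  edge := fun i j => G.edge i j ∧ i < k ∧ j < k
  edge_lt := fun i j h => ⟨h.2.1, h.2.2⟩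

/-- Upper part of the index cut at `k` (re-indexed from 0). -/
def cutHi (G : Graph B) (k : ℕ) : Graph B where
  n := G.n - k
  label := fun i => G.label (i + k)
  edge := fun i j => G.edge (i + k) (j + k)
  edge_lt := by
    intro i j h
    have := G.edge_lt _ _ h
    omega

/-- Weak connectedness: any two vertices are joined by an undirected path. -/
def WeaklyConnected (G : Graph B) : Prop :=
  ∀ i j, i < G.n → j < G.n →
    Relation.ReflTransGen (fun a b => G.edge a b ∨ G.edge b a) i j

/-- Union of a nonempty sequence of graph representations. -/
def unionList (G : Graph B) (L : List (Graph B)) : Graph B :=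
  L.foldl union G

end Graph

/-! ## Contexts built from bindings with ordered and unordered composition -/

inductive GCtx (B : Type) where
  | empty : GCtx B
  | bind : B → GCtx B
  | comma : GCtx B → GCtx B → GCtx B
  | par : GCtx B → GCtx B → GCtx B

/-- Context patterns: contexts with a single hole. -/
inductive GPat (B : Type) where
  | hole : GPat B
  | commaL : GPat B → GCtx B → GPat B
  | commaR : GCtx B → GPat B → GPat B
  | parL : GPat B → GCtx B → GPat B
  | parR : GCtx B → GPat B → GPat B

def GPat.fill {B : Type} : GPat B → GCtx B → GCtx B
  | .hole, Γ => Γ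
  | .commaL G Δ, Γ => .comma (G.fill Γ) Δ
  | .commaR Δ G, Γ => .comma Δ (G.fill Γ)
  | .parL G Δ, Γ => .par (G.fill Γ) Δ
  | .parR Δ G, Γ => .par Δ (G.fill Γ)

def GCtx.toList {B : Type} : GCtx B → List B
  | .empty => []
  | .bind b => [b]
  | .comma Γ₁ Γ₂ => Γ₁.toList ++ Γ₂.toList
  | .par Γ₁ Γ₂ => Γ₁.toList ++ Γ₂.toList

/-- Graph part of the interpretation of a context: unrestricted bindings
    contribute no vertex, ordered bindings one vertex; `comma` is join,
    `par` is union. -/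
def GCtx.interpG {B : Type} [Inhabited B] (unr : B → Bool) : GCtx B → Graph B
  | .empty => Graph.zero B
  | .bind b =>
      if unr b then Graph.zero B
      else ⟨1, fun _ => b, fun _ _ => False, fun _ _ h => h.elim⟩
  | .comma Γ₁ Γ₂ => (interpG unr Γ₁).join (interpG unr Γ₂)
  | .par Γ₁ Γ₂ => (interpG unr Γ₁).union (interpG unr Γ₂)

/-- Set part of the interpretation of a context: the set of its
    unrestricted bindings. -/
def GCtx.unrSet {B : Type} (unr : B → Bool) : GCtx B → Set B
  | .empty => ∅
  | .bind b => if unr b then {b} else ∅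
  | .comma Γ₁ Γ₂ => unrSet unr Γ₁ ∪ unrSet unr Γ₂
  | .par Γ₁ Γ₂ => unrSet unr Γ₁ ∪ unrSet unr Γ₂

/-! ## Ordered partial monoids -/

structure OPM (α : Type) where
  mul : α → α → Option α
  eps : α
  le : α → α → Prop
  le_refl : ∀ a, le a a
  le_trans : ∀ a b c, le a b → le b c → le a c
  eps_mul : ∀ a, mul eps a = some a
  mul_eps : ∀ a, mul a eps = some a
  mul_assoc : ∀ a b c,
    (mul a b).bind (fun x => mul x c) = (mul b c).bind (fun x => mul a x)
  mul_mono : ∀ a a' b b' c', le a a' → le b b' → mul a' b' = some c' →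
    ∃ c, mul a b = some c ∧ le c c'

/-- `P.mulLe a b c` means `a ⊙ b` is defined and `a ⊙ b ≤ c`. -/
def OPM.mulLe {α : Type} (P : OPM α) (a b c : α) : Prop :=
  ∃ r, P.mul a b = some r ∧ P.le r c

/-! ## Types and effects (effects are booleans: `false` = 0, `true` = 1) -/

inductive Ty (α : Type) where
  | unit : Ty α
  | res : α → Ty α
  | arrow : Ty α → Bool → Ty α → Ty α
  | uarrow : Ty α → Bool → Ty α → Ty α
  | rarrow : Ty α → Bool → Ty α → Ty α
  | larrow : Ty α → Bool → Ty α → Ty α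
  | uprod : Ty α → Ty α → Ty α
  | oprod : Ty α → Ty α → Ty α

def Ty.unrB {α : Type} : Ty α → Bool
  | .unit => true
  | .res _ => false
  | .arrow _ _ _ => true
  | .uarrow _ _ _ => false
  | .rarrow _ _ _ => false
  | .larrow _ _ _ => false
  | .uprod S T => S.unrB && T.unrB
  | .oprod S T => S.unrB && T.unrB

/-- Unrestricted types. -/
def Ty.Unr {α : Type} (T : Ty α) : Prop := T.unrB = true

/-- Ordered types. -/
def Ty.Ord {α : Type} (T : Ty α) : Prop := T.unrB = false

/-! ## Bindings and typing contexts -/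

inductive Binding (α : Type) where
  | var : ℕ → Ty α → Binding α
  | loc : ℕ → α → Binding α

instance {α : Type} : Inhabited (Binding α) := ⟨Binding.var 0 Ty.unit⟩

def Binding.unrB {α : Type} : Binding α → Bool
  | .var _ T => T.unrB
  | .loc _ _ => false

abbrev Ctx (α : Type) := GCtx (Binding α)
abbrev CtxPat (α : Type) := GPat (Binding α)

/-- Graph part of the interpretation of a typing context. -/
def interpC {α : Type} (Γ : Ctx α) : Graph (Binding α) :=
  GCtx.interpG Binding.unrB Γ

/-- Set part of the interpretation of a typing context. -/
def unrSetC {α : Type} (Γ : Ctx α) : Set (Binding α) :=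
  GCtx.unrSet Binding.unrB Γ

/-- Subcontext relation `Γ₁ ≲ Γ₂`: up to isomorphism on both sides, the graph
    of `Γ₁` is a spanning subgraph of the graph of `Γ₂`, and the unrestricted
    set of `Γ₂` is contained in that of `Γ₁`. -/
def SubC {α : Type} (Γ₁ Γ₂ : Ctx α) : Prop :=
  (∃ G₁ G₂ : Graph (Binding α),
      Graph.Iso (interpC Γ₁) G₁ ∧ Graph.Spanning G₁ G₂ ∧ Graph.Iso G₂ (interpC Γ₂)) ∧
    unrSetC Γ₂ ⊆ unrSetC Γ₁

def vdom {α : Type} (Γ : Ctx α) : Set ℕ :=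
  {x | ∃ T, Binding.var x T ∈ GCtx.toList Γ}

def ldom {α : Type} (Γ : Ctx α) : Set ℕ :=
  {l | ∃ m, Binding.loc l m ∈ GCtx.toList Γ}

/-- All bindings of the context are unrestricted. -/
def isUnrCtx {α : Type} (Γ : Ctx α) : Prop :=
  ∀ b ∈ GCtx.toList Γ, Binding.unrB b = true

/-- Run-time contexts contain only location bindings. -/
def isRuntime {α : Type} (Γ : Ctx α) : Prop :=
  ∀ b ∈ GCtx.toList Γ, ∃ l m, b = Binding.loc l m

/-! ## Expressions -/

inductive Const (α : Type) where
  | unit : Const α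
  | new : α → Const α
  | op : α → Const α
  | split : α → α → Const α
  | drop : Const α

inductive Expr (α : Type) where
  | const : Const α → Expr α
  | loc : ℕ → Expr α
  | var : ℕ → Expr α
  | abs : ℕ → Expr α → Expr α
  | uabs : ℕ → Expr α → Expr α
  | rabs : ℕ → Expr α → Expr α
  | labs : ℕ → Expr α → Expr α
  | app : Expr α → Expr α → Expr α
  | uapp : Expr α → Expr α → Expr α
  | rapp : Expr α → Expr α → Expr α
  | lapp : Expr α → Expr α → Expr α
  | upair : Expr α → Expr α → Expr α
  | opair : Expr α → Expr α → Expr α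
  | ulet : ℕ → ℕ → Expr α → Expr α → Expr α
  | olet : ℕ → ℕ → Expr α → Expr α → Expr α

inductive IsValue {α : Type} : Expr α → Prop where
  | const : ∀ c : Const α, IsValue (Expr.const c)
  | loc : ∀ l : ℕ, IsValue (Expr.loc l)
  | abs : ∀ (x : ℕ) (M : Expr α), IsValue (Expr.abs x M)
  | uabs : ∀ (x : ℕ) (M : Expr α), IsValue (Expr.uabs x M)
  | rabs : ∀ (x : ℕ) (M : Expr α), IsValue (Expr.rabs x M)
  | labs : ∀ (x : ℕ) (M : Expr α), IsValue (Expr.labs x M)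
  | upair : ∀ V₁ V₂ : Expr α, IsValue V₁ → IsValue V₂ → IsValue (Expr.upair V₁ V₂)
  | opair : ∀ V₁ V₂ : Expr α, IsValue V₁ → IsValue V₂ → IsValue (Expr.opair V₁ V₂)

/-- Substitution `M[V/x]` (values substituted at run time are closed, so
    no capture can occur). -/
def subst {α : Type} : Expr α → Expr α → ℕ → Expr α
  | Expr.const c, _, _ => Expr.const c
  | Expr.loc l, _, _ => Expr.loc l
  | Expr.var y, V, x => if y = x then V else Expr.var y
  | Expr.abs y N, V, x => Expr.abs y (if y = x then N else subst N V x)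
  | Expr.uabs y N, V, x => Expr.uabs y (if y = x then N else subst N V x)
  | Expr.rabs y N, V, x => Expr.rabs y (if y = x then N else subst N V x)
  | Expr.labs y N, V, x => Expr.labs y (if y = x then N else subst N V x)
  | Expr.app M N, V, x => Expr.app (subst M V x) (subst N V x)
  | Expr.uapp M N, V, x => Expr.uapp (subst M V x) (subst N V x)
  | Expr.rapp M N, V, x => Expr.rapp (subst M V x) (subst N V x)
  | Expr.lapp M N, V, x => Expr.lapp (subst M V x) (subst N V x)
  | Expr.upair M N, V, x => Expr.upair (subst M V x) (subst N V x)
  | Expr.opair M N, V, x => Expr.opair (subst M V x) (subst N V x)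
  | Expr.ulet y z M N, V, x =>
      Expr.ulet y z (subst M V x) (if y = x ∨ z = x then N else subst N V x)
  | Expr.olet y z M N, V, x =>
      Expr.olet y z (subst M V x) (if y = x ∨ z = x then N else subst N V x)

/-! ## Typing (Fig. 7) -/

inductive Typing {α : Type} (P : OPM α) : Ctx α → Expr α → Ty α → Bool → Prop where
  | unit : Typing P GCtx.empty (Expr.const Const.unit) Ty.unit false
  | new : ∀ m : α,
      Typing P GCtx.empty (Expr.const (Const.new m))
        (Ty.arrow Ty.unit false (Ty.res m)) false
  | op : ∀ m₀ m₁ m₂ : α, P.mulLe m₁ m₂ m₀ →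
      Typing P GCtx.empty (Expr.const (Const.op m₁))
        (Ty.arrow (Ty.res m₀) true (Ty.res m₂)) false
  | split : ∀ m₀ m₁ m₂ : α, P.mulLe m₁ m₂ m₀ →
      Typing P GCtx.empty (Expr.const (Const.split m₁ m₂))
        (Ty.arrow (Ty.res m₀) false (Ty.oprod (Ty.res m₁) (Ty.res m₂))) false
  | drop : ∀ m : α, P.le P.eps m →
      Typing P GCtx.empty (Expr.const Const.drop)
        (Ty.arrow (Ty.res m) false Ty.unit) false
  | var : ∀ (x : ℕ) (T : Ty α),
      Typing P (GCtx.bind (Binding.var x T)) (Expr.var x) T false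
  | loc : ∀ (l : ℕ) (m : α),
      Typing P (GCtx.bind (Binding.loc l m)) (Expr.loc l) (Ty.res m) false
  | abs : ∀ (Γ : Ctx α) (x : ℕ) (S T : Ty α) (M : Expr α) (e : Bool),
      x ∉ vdom Γ → isUnrCtx Γ →
      Typing P (GCtx.comma Γ (GCtx.bind (Binding.var x S))) M T e →
      Typing P Γ (Expr.abs x M) (Ty.arrow S e T) false
  | uabs : ∀ (Γ : Ctx α) (x : ℕ) (S T : Ty α) (M : Expr α) (e : Bool),
      x ∉ vdom Γ →
      Typing P (GCtx.par Γ (GCtx.bind (Binding.var x S))) M T e →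
      Typing P Γ (Expr.uabs x M) (Ty.uarrow S e T) false
  | rabs : ∀ (Γ : Ctx α) (x : ℕ) (S T : Ty α) (M : Expr α) (e : Bool),
      x ∉ vdom Γ →
      Typing P (GCtx.comma Γ (GCtx.bind (Binding.var x S))) M T e →
      Typing P Γ (Expr.rabs x M) (Ty.rarrow S e T) false
  | labs : ∀ (Γ : Ctx α) (x : ℕ) (S T : Ty α) (M : Expr α) (e : Bool),
      x ∉ vdom Γ →
      Typing P (GCtx.comma (GCtx.bind (Binding.var x S)) Γ) M T e →
      Typing P Γ (Expr.labs x M) (Ty.larrow S e T) false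
  | app : ∀ (Γ₁ Γ₂ : Ctx α) (M N : Expr α) (S T : Ty α) (e e₁ e₂ : Bool),
      Typing P Γ₁ M (Ty.arrow S e T) e₁ → Typing P Γ₂ N S e₂ →
      Typing P (GCtx.comma Γ₁ Γ₂) (Expr.app M N) T (e || e₁ || e₂)
  | uapp : ∀ (Γ₁ Γ₂ : Ctx α) (M N : Expr α) (S T : Ty α) (e e₁ e₂ : Bool),
      Typing P Γ₁ M (Ty.uarrow S e T) e₁ → Typing P Γ₂ N S e₂ →
      Typing P (GCtx.par Γ₁ Γ₂) (Expr.uapp M N) T (e || e₁ || e₂)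
  | rapp : ∀ (Γ₁ Γ₂ : Ctx α) (M N : Expr α) (S T : Ty α) (e e₁ : Bool),
      Typing P Γ₁ M (Ty.rarrow S e T) e₁ → Typing P Γ₂ N S false →
      Typing P (GCtx.comma Γ₁ Γ₂) (Expr.rapp M N) T (e || e₁)
  | lapp : ∀ (Γ₁ Γ₂ : Ctx α) (M N : Expr α) (S T : Ty α) (e e₂ : Bool),
      Typing P Γ₂ M (Ty.larrow S e T) false → Typing P Γ₁ N S e₂ →
      Typing P (GCtx.comma Γ₁ Γ₂) (Expr.lapp M N) T (e || e₂)
  | upair : ∀ (Γ₁ Γ₂ : Ctx α) (M N : Expr α) (S T : Ty α) (e₁ e₂ : Bool),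
      Typing P Γ₁ M S e₁ → Typing P Γ₂ N T e₂ →
      Typing P (GCtx.par Γ₁ Γ₂) (Expr.upair M N) (Ty.uprod S T) (e₁ || e₂)
  | opair : ∀ (Γ₁ Γ₂ : Ctx α) (M N : Expr α) (S T : Ty α) (e₁ e₂ : Bool),
      (Ty.Ord S → e₂ = false) →
      Typing P Γ₁ M S e₁ → Typing P Γ₂ N T e₂ →
      Typing P (GCtx.comma Γ₁ Γ₂) (Expr.opair M N) (Ty.oprod S T) (e₁ || e₂)
  | ulet : ∀ (G : CtxPat α) (Γ : Ctx α) (x y : ℕ) (M N : Expr α)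
        (S₁ S₂ T : Ty α) (e : Bool),
      x ≠ y → x ∉ vdom (GPat.fill G Γ) → y ∉ vdom (GPat.fill G Γ) →
      Typing P Γ M (Ty.uprod S₁ S₂) false →
      Typing P (GPat.fill G (GCtx.par (GCtx.bind (Binding.var x S₁))
        (GCtx.bind (Binding.var y S₂)))) N T e →
      Typing P (GPat.fill G Γ) (Expr.ulet x y M N) T e
  | olet : ∀ (G : CtxPat α) (Γ : Ctx α) (x y : ℕ) (M N : Expr α)
        (S₁ S₂ T : Ty α) (e : Bool),
      x ≠ y → x ∉ vdom (GPat.fill G Γ) → y ∉ vdom (GPat.fill G Γ) →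
      Typing P Γ M (Ty.oprod S₁ S₂) false →
      Typing P (GPat.fill G (GCtx.comma (GCtx.bind (Binding.var x S₁))
        (GCtx.bind (Binding.var y S₂)))) N T e →
      Typing P (GPat.fill G Γ) (Expr.olet x y M N) T e
  | weaken : ∀ (Γ₁ Γ₂ : Ctx α) (M : Expr α) (T : Ty α) (e₁ e₂ : Bool),
      Typing P Γ₁ M T e₁ → SubC Γ₂ Γ₁ → e₁ ≤ e₂ →
      Typing P Γ₂ M T e₂

/-! ## Heaps -/

structure Heap (α : Type) where
  find : ℕ → Option (ℕ × α × α)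
  fin : Set.Finite {l | find l ≠ none}

def Heap.dom {α : Type} (H : Heap α) : Set ℕ := {l | H.find l ≠ none}

def Heap.update {α : Type} (H : Heap α) (l : ℕ) (t : ℕ × α × α) : Heap α where
  find := fun l' => if l' = l then some t else H.find l'
  fin := by
    have hsub : {l' | (if l' = l then some t else H.find l') ≠ none} ⊆
        insert l {l' | H.find l' ≠ none} := by
      intro x hx
      by_cases h : x = l
      · exact Set.mem_insert_iff.mpr (Or.inl h)
      · refine Set.mem_insert_iff.mpr (Or.inr ?_)
        simp only [Set.mem_setOf_eq, if_neg h] at hx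
        exact hx
    exact Set.Finite.subset (Set.Finite.insert l H.fin) hsub

def Heap.erase {α : Type} (H : Heap α) (l : ℕ) : Heap α where
  find := fun l' => if l' = l then none else H.find l'
  fin := by
    apply Set.Finite.subset H.fin
    intro x hx
    simp only [Set.mem_setOf_eq] at hx ⊢
    by_cases h : x = l
    · rw [if_pos h] at hx; exact absurd rfl hx
    · rw [if_neg h] at hx; exact hx

def Heap.empty (α : Type) : Heap α :=
  ⟨fun _ => none, Set.Finite.subset Set.finite_empty (fun _ hx => (hx rfl).elim)⟩

/-! ## Reduction -/

/-- Expression reduction `M →β M'`. -/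
inductive BetaStep {α : Type} : Expr α → Expr α → Prop where
  | beta : ∀ (x : ℕ) (M V : Expr α), IsValue V →
      BetaStep (Expr.app (Expr.abs x M) V) (subst M V x)
  | ubeta : ∀ (x : ℕ) (M V : Expr α), IsValue V →
      BetaStep (Expr.uapp (Expr.uabs x M) V) (subst M V x)
  | rbeta : ∀ (x : ℕ) (M V : Expr α), IsValue V →
      BetaStep (Expr.rapp (Expr.rabs x M) V) (subst M V x)
  | lbeta : ∀ (x : ℕ) (M V : Expr α), IsValue V →
      BetaStep (Expr.lapp (Expr.labs x M) V) (subst M V x)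
  | uletv : ∀ (x y : ℕ) (M V₁ V₂ : Expr α), x ≠ y → IsValue V₁ → IsValue V₂ →
      BetaStep (Expr.ulet x y (Expr.upair V₁ V₂) M) (subst (subst M V₁ x) V₂ y)
  | oletv : ∀ (x y : ℕ) (M V₁ V₂ : Expr α), x ≠ y → IsValue V₁ → IsValue V₂ →
      BetaStep (Expr.olet x y (Expr.opair V₁ V₂) M) (subst (subst M V₁ x) V₂ y)

/-- Configuration reduction `M | ℋ →γ M' | ℋ'`. -/
inductive CfgStep {α : Type} (P : OPM α) : Expr α → Heap α → Expr α → Heap α → Prop where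
  | new : ∀ (H : Heap α) (l : ℕ) (m : α), l ∉ Heap.dom H →
      CfgStep P (Expr.app (Expr.const (Const.new m)) (Expr.const Const.unit)) H
        (Expr.loc l) (H.update l (0, m, P.eps))
  | op : ∀ (H : Heap α) (l n : ℕ) (m₀ m m' m'' : α),
      H.find l = some (n, m₀, m') → P.mul m' m = some m'' →
      (∃ m₃ : α, P.mulLe m'' m₃ m₀) →
      CfgStep P (Expr.app (Expr.const (Const.op m)) (Expr.loc l)) H
        (Expr.loc l) (H.update l (n, m₀, m''))
  | cl1 : ∀ (H : Heap α) (l n : ℕ) (m₀ m : α),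
      H.find l = some (n + 1, m₀, m) →
      CfgStep P (Expr.app (Expr.const Const.drop) (Expr.loc l)) H
        (Expr.const Const.unit) (H.update l (n, m₀, m))
  | cl2 : ∀ (H : Heap α) (l : ℕ) (m₀ m : α),
      H.find l = some (0, m₀, m) → P.le m m₀ →
      CfgStep P (Expr.app (Expr.const Const.drop) (Expr.loc l)) H
        (Expr.const Const.unit) (H.erase l)
  | sp : ∀ (H : Heap α) (l n : ℕ) (m₀ m m₁ m₂ : α),
      H.find l = some (n, m₀, m) →
      CfgStep P (Expr.app (Expr.const (Const.split m₁ m₂)) (Expr.loc l)) H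
        (Expr.opair (Expr.loc l) (Expr.loc l)) (H.update l (n + 1, m₀, m))

/-- Call-by-value evaluation contexts (left-to-right, except that
    `<`-applications evaluate right-to-left). -/
inductive ECtx (α : Type) : Type where
  | hole : ECtx α
  | appL : ECtx α → Expr α → ECtx α
  | appR : (V : Expr α) → IsValue V → ECtx α → ECtx α
  | uappL : ECtx α → Expr α → ECtx α
  | uappR : (V : Expr α) → IsValue V → ECtx α → ECtx α
  | rappL : ECtx α → Expr α → ECtx α
  | rappR : (V : Expr α) → IsValue V → ECtx α → ECtx α
  | lappL : ECtx α → (V : Expr α) → IsValue V → ECtx α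
  | lappR : Expr α → ECtx α → ECtx α
  | upairL : ECtx α → Expr α → ECtx α
  | upairR : (V : Expr α) → IsValue V → ECtx α → ECtx α
  | opairL : ECtx α → Expr α → ECtx α
  | opairR : (V : Expr α) → IsValue V → ECtx α → ECtx α
  | uletE : ℕ → ℕ → ECtx α → Expr α → ECtx α
  | oletE : ℕ → ℕ → ECtx α → Expr α → ECtx α

def ECtx.plug {α : Type} : ECtx α → Expr α → Expr α
  | .hole, M => M
  | .appL E N, M => Expr.app (E.plug M) N
  | .appR V _ E, M => Expr.app V (E.plug M)
  | .uappL E N, M => Expr.uapp (E.plug M) N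
  | .uappR V _ E, M => Expr.uapp V (E.plug M)
  | .rappL E N, M => Expr.rapp (E.plug M) N
  | .rappR V _ E, M => Expr.rapp V (E.plug M)
  | .lappL E V _, M => Expr.lapp (E.plug M) V
  | .lappR N E, M => Expr.lapp N (E.plug M)
  | .upairL E N, M => Expr.upair (E.plug M) N
  | .upairR V _ E, M => Expr.upair V (E.plug M)
  | .opairL E N, M => Expr.opair (E.plug M) N
  | .opairR V _ E, M => Expr.opair V (E.plug M)
  | .uletE x y E N, M => Expr.ulet x y (E.plug M) N
  | .oletE x y E N, M => Expr.olet x y (E.plug M) N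

/-- Contextual reduction `M | ℋ → M' | ℋ'`. -/
inductive Step {α : Type} (P : OPM α) : Expr α → Heap α → Expr α → Heap α → Prop where
  | exp : ∀ (E : ECtx α) (M M' : Expr α) (H : Heap α),
      BetaStep M M' → Step P (E.plug M) H (E.plug M') H
  | cfg : ∀ (E : ECtx α) (M M' : Expr α) (H H' : Heap α),
      CfgStep P M H M' H' → Step P (E.plug M) H (E.plug M') H'

/-! ## Run-time contexts, focus, heap typing -/

/-- Focus on location `l`: replace every binding of a location other than `l`
    by the empty context. -/
def focus {α : Type} : Ctx α → ℕ → Ctx α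
  | GCtx.empty, _ => GCtx.empty
  | GCtx.bind (Binding.loc l' m), l =>
      if l' = l then GCtx.bind (Binding.loc l' m) else GCtx.empty
  | GCtx.bind (Binding.var x T), _ => GCtx.bind (Binding.var x T)
  | GCtx.comma Γ₁ Γ₂, l => GCtx.comma (focus Γ₁ l) (focus Γ₂ l)
  | GCtx.par Γ₁ Γ₂, l => GCtx.par (focus Γ₁ l) (focus Γ₂ l)

/-- A run-time context is order-defined if every focus graph has a unique
    topological ordering. -/
def orderDefined {α : Type} (Γ : Ctx α) : Prop :=
  ∀ l : ℕ, Graph.Traceable (interpC (focus Γ l))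

def bUsage {α : Type} (P : OPM α) : Binding α → α
  | Binding.loc _ m => m
  | Binding.var _ _ => P.eps

def listProd {α : Type} (P : OPM α) : List α → Option α
  | [] => some P.eps
  | m :: ms => (listProd P ms).bind fun r => P.mul m r

/-- `focusUsage P Γ l u` : the usage projection of `⟨Γ⟩_l` is defined and
    equal to `u` (the ⊙-product of the usages along a topological ordering of
    the focus graph). -/
def focusUsage {α : Type} (P : OPM α) (Γ : Ctx α) (l : ℕ) (u : α) : Prop :=
  ∃ f : Equiv.Perm (Fin (interpC (focus Γ l)).n),
    Graph.IsTopOrder (interpC (focus Γ l)) f ∧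
      listProd P (List.ofFn fun k =>
        bUsage P ((interpC (focus Γ l)).label (f k).val)) = some u

/-- Heap typing `C ⊢ ℋ`. -/
def HeapTy {α : Type} (P : OPM α) (C : Ctx α) (H : Heap α) : Prop :=
  orderDefined C ∧
  ldom C = Heap.dom H ∧
  ∀ (l n : ℕ) (m₀ m : α), H.find l = some (n, m₀, m) →
    (interpC (focus C l)).n = n + 1 ∧
    ∃ u r : α, focusUsage P C l u ∧ P.mul m u = some r ∧ P.le r m₀

/-!
Every edge of the graph of a context points from a smaller to a larger vertex number, so the
numbering itself is a topological ordering, and it is the only one exactly when consecutive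
vertices are adjacent (`IsChain`): otherwise swapping them gives a second one. Heap typing thus
depends, at each location, only on whether the focus graph is a chain and on its labels in
numbering order. Both are compositional in the hole of a pattern `𝒞`: the labels of `⟨𝒞[Δ]⟩_l`
are those of `⟨Δ⟩_l` between a fixed prefix and suffix, and `⟨𝒞[Δ]⟩_l` stays a chain when `Δ` is
replaced by a chain that is empty unless `⟨Δ⟩_l` was nonempty. Each step of heap tracking then
replaces one usage `m'` of the product by `m₁ ⊙ m₂` or by `ε` (or, at the front, moves `m₁` into
the trace), and monotonicity and associativity of `⊙` preserve `m ⊙ ∏ ≤ m₀`.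
-/

namespace Graph

variable {B : Type}

def labels (G : Graph B) : List B := List.ofFn fun k : Fin G.n => G.label k

def IsChain (G : Graph B) : Prop := ∀ i, i + 1 < G.n → G.edge i (i + 1)

@[simp] lemma length_labels (G : Graph B) : G.labels.length = G.n := List.length_ofFn

lemma labels_join (G₁ G₂ : Graph B) : (G₁.join G₂).labels = G₁.labels ++ G₂.labels := by
  simp [labels, join, List.ofFn_add]

lemma labels_union (G₁ G₂ : Graph B) : (G₁.union G₂).labels = G₁.labels ++ G₂.labels := by
  simp [labels, union, List.ofFn_add]

lemma isChain_of_n_le_one {G : Graph B} (h : G.n ≤ 1) : G.IsChain :=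
  fun i hi => absurd hi (by omega)

lemma isChain_join {G₁ G₂ : Graph B} : (G₁.join G₂).IsChain ↔ G₁.IsChain ∧ G₂.IsChain := by
  constructor
  · intro h
    refine ⟨fun i hi => ?_, fun i hi => ?_⟩
    · rcases h i (by simp only [join]; omega) with h | ⟨h1, -, -⟩ | ⟨-, h2, -⟩
      · exact h
      · omega
      · omega
    · rcases h (G₁.n + i) (show G₁.n + i + 1 < G₁.n + G₂.n by omega) with
        h | ⟨-, -, h⟩ | ⟨h1, -, -⟩
      · have := G₁.edge_lt _ _ h; omega
      · simpa [Nat.add_assoc] using h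
      · omega
  · rintro ⟨h₁, h₂⟩ i hi
    simp only [join] at hi ⊢
    by_cases hlo : i + 1 < G₁.n
    · exact Or.inl (h₁ i hlo)
    by_cases hcross : i + 1 = G₁.n
    · right; right; omega
    · refine Or.inr (Or.inl ⟨by omega, by omega, ?_⟩)
      rw [show i + 1 - G₁.n = i - G₁.n + 1 by omega]
      exact h₂ _ (by omega)

lemma isChain_union {G₁ G₂ : Graph B} :
    (G₁.union G₂).IsChain ↔ G₁.IsChain ∧ G₂.IsChain ∧ (G₁.n = 0 ∨ G₂.n = 0) := by
  constructor
  · intro h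
    refine ⟨fun i hi => ?_, fun i hi => ?_, ?_⟩
    · rcases h i (by simp only [union]; omega) with h | ⟨h1, -, -⟩
      · exact h
      · omega
    · rcases h (G₁.n + i) (show G₁.n + i + 1 < G₁.n + G₂.n by omega) with h | ⟨-, -, h⟩
      · have := G₁.edge_lt _ _ h; omega
      · simpa [Nat.add_assoc] using h
    · by_contra hne
      rcases h (G₁.n - 1) (by simp only [union]; omega) with h | ⟨h1, -, -⟩
      · have := G₁.edge_lt _ _ h; omega
      · omega
  · rintro ⟨h₁, h₂, h0 | h0⟩ i hi <;> simp only [union] at hi ⊢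
    · refine Or.inr ⟨by omega, by omega, ?_⟩
      rw [show i + 1 - G₁.n = i - G₁.n + 1 by omega]
      exact h₂ _ (by omega)
    · exact Or.inl (h₁ i (by omega))

lemma TopOrdered.join {G₁ G₂ : Graph B} (h₁ : G₁.TopOrdered) (h₂ : G₂.TopOrdered) :
    (G₁.join G₂).TopOrdered := by
  rintro i j (h | ⟨hi, hj, h⟩ | ⟨hi, hj, -⟩)
  · exact h₁ i j h
  · have := h₂ _ _ h; omega
  · omega

lemma TopOrdered.union {G₁ G₂ : Graph B} (h₁ : G₁.TopOrdered) (h₂ : G₂.TopOrdered) :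
    (G₁.union G₂).TopOrdered := by
  rintro i j (h | ⟨hi, hj, h⟩)
  · exact h₁ i j h
  · have := h₂ _ _ h; omega

lemma TopOrdered.isTopOrder_one {G : Graph B} (h : G.TopOrdered) : G.IsTopOrder 1 :=
  fun i j hij => h i j hij

lemma IsChain.eq_one_of_isTopOrder {G : Graph B} (hc : G.IsChain) {f : Equiv.Perm (Fin G.n)}
    (hf : G.IsTopOrder f) : f = 1 := by
  have hlt : ∀ i j (hij : i < j) (hj : j < G.n), f.symm ⟨i, hij.trans hj⟩ < f.symm ⟨j, hj⟩ := by
    intro i j hij hj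
    induction j, hij using Nat.le_induction with
    | base => exact hf _ _ (hc i hj)
    | succ j hij ih => exact (ih (by omega)).trans (hf ⟨j, by omega⟩ ⟨j + 1, hj⟩ (hc j hj))
  have hid : ⇑f.symm = id := StrictMono.eq_id fun a b hab => hlt a b hab b.2
  exact Equiv.ext fun x => by simpa using (congrFun hid (f x)).symm

lemma TopOrdered.traceable_iff {G : Graph B} (h : G.TopOrdered) : G.Traceable ↔ G.IsChain := by
  refine ⟨fun ⟨f, _, huniq⟩ i hi => ?_,
    fun hc => ⟨1, h.isTopOrder_one, fun f hf => hc.eq_one_of_isTopOrder hf⟩⟩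
  by_contra hne
  set a : Fin G.n := ⟨i, by omega⟩
  set b : Fin G.n := ⟨i + 1, hi⟩
  have hswap : G.IsTopOrder (Equiv.swap a b) := by
    intro x y hxy
    have hlt := h _ _ hxy
    have hne' : ¬ (x = a ∧ y = b) := by
      rintro ⟨rfl, rfl⟩; exact hne hxy
    simp only [Equiv.symm_swap, Equiv.swap_apply_def]
    split_ifs <;> simp only [Fin.ext_iff, Fin.lt_iff_val_lt_val, a, b] at * <;> omega
  have hab : Equiv.swap a b = 1 := (huniq _ hswap).trans (huniq _ h.isTopOrder_one).symm
  have := congrArg (fun g : Equiv.Perm (Fin G.n) => (g a).val) hab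
  simp [a, b] at this

end Graph

namespace GCtx

variable {B : Type} [Inhabited B] (unr : B → Bool)

lemma topOrdered_interpG (Γ : GCtx B) : (Γ.interpG unr).TopOrdered := by
  induction Γ with
  | empty => exact fun _ _ h => h.elim
  | bind b => unfold interpG; split <;> exact fun _ _ h => h.elim
  | comma Γ₁ Γ₂ ih₁ ih₂ => exact ih₁.join ih₂
  | par Γ₁ Γ₂ ih₁ ih₂ => exact ih₁.union ih₂

lemma labels_interpG (Γ : GCtx B) :
    (Γ.interpG unr).labels = Γ.toList.filter fun b => !unr b := by
  induction Γ with
  | empty => rfl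
  | bind b => cases h : unr b <;> simp [interpG, h, Graph.labels, toList, Graph.zero]
  | comma Γ₁ Γ₂ ih₁ ih₂ => simp [interpG, Graph.labels_join, ih₁, ih₂, toList]
  | par Γ₁ Γ₂ ih₁ ih₂ => simp [interpG, Graph.labels_union, ih₁, ih₂, toList]

end GCtx

namespace GPat

variable {B : Type}

lemma toList_fill (G : GPat B) : ∃ A C, ∀ Δ, (G.fill Δ).toList = A ++ Δ.toList ++ C := by
  induction G with
  | hole => exact ⟨[], [], fun Δ => by simp [fill]⟩
  | commaL G Γ ih | parL G Γ ih =>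
    obtain ⟨A, C, h⟩ := ih
    exact ⟨A, C ++ Γ.toList, fun Δ => by simp [fill, GCtx.toList, h]⟩
  | commaR Γ G ih | parR Γ G ih =>
    obtain ⟨A, C, h⟩ := ih
    exact ⟨Γ.toList ++ A, C, fun Δ => by simp [fill, GCtx.toList, h]⟩

variable [Inhabited B] (unr : B → Bool)

lemma labels_interpG_fill (G : GPat B) :
    ∃ A C, ∀ Δ, ((G.fill Δ).interpG unr).labels = A ++ (Δ.interpG unr).labels ++ C := by
  obtain ⟨A, C, h⟩ := G.toList_fill
  exact ⟨A.filter (!unr ·), C.filter (!unr ·), fun Δ => by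
    simp [GCtx.labels_interpG, h, List.filter_append]⟩

lemma n_interpG_fill_pos (G : GPat B) {Δ Δ' : GCtx B}
    (hpos : 0 < (Δ'.interpG unr).n → 0 < (Δ.interpG unr).n)
    (h : 0 < ((G.fill Δ').interpG unr).n) : 0 < ((G.fill Δ).interpG unr).n := by
  obtain ⟨A, C, hAC⟩ := G.labels_interpG_fill unr
  have h₁ := congrArg List.length (hAC Δ)
  have h₂ := congrArg List.length (hAC Δ')
  simp only [Graph.length_labels, List.length_append] at h₁ h₂
  omega

lemma isChain_interpG_fill (G : GPat B) {Δ Δ' : GCtx B}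
    (hpos : 0 < (Δ'.interpG unr).n → 0 < (Δ.interpG unr).n) (hΔ' : (Δ'.interpG unr).IsChain) :
    ((G.fill Δ).interpG unr).IsChain → ((G.fill Δ').interpG unr).IsChain := by
  have hzero := fun G : GPat B => mt (G.n_interpG_fill_pos unr hpos)
  induction G with
  | hole => exact fun _ => hΔ'
  | commaL G Γ ih =>
    simp only [fill, GCtx.interpG, Graph.isChain_join]
    exact And.imp_left ih
  | commaR Γ G ih =>
    simp only [fill, GCtx.interpG, Graph.isChain_join]
    exact And.imp_right ih
  | parL G Γ ih =>
    simp only [fill, GCtx.interpG, Graph.isChain_union]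
    rintro ⟨h₁, h₂, h0⟩
    exact ⟨ih h₁, h₂, h0.imp_left fun h => by simpa using hzero G (by simpa using h)⟩
  | parR Γ G ih =>
    simp only [fill, GCtx.interpG, Graph.isChain_union]
    rintro ⟨h₁, h₂, h0⟩
    exact ⟨h₁, ih h₂, h0.imp_right fun h => by simpa using hzero G (by simpa using h)⟩

end GPat

section ListProd

variable {α : Type} (P : OPM α)

def listProdLe (L : List α) (c : α) : Prop := ∃ r, listProd P L = some r ∧ P.le r c

lemma listProd_append (A B : List α) :
    listProd P (A ++ B) = (listProd P A).bind fun a => (listProd P B).bind (P.mul a) := by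
  induction A with
  | nil => cases h : listProd P B <;> simp [listProd, h, P.eps_mul]
  | cons a A ih =>
    simp only [List.cons_append, listProd, ih]
    cases listProd P A <;> cases listProd P B <;> simp [(P.mul_assoc _ _ _).symm]

lemma listProd_append_eq_some {A B : List α} {u : α} :
    listProd P (A ++ B) = some u ↔
      ∃ a b, listProd P A = some a ∧ listProd P B = some b ∧ P.mul a b = some u := by
  simp [listProd_append, Option.bind_eq_some_iff]

lemma listProd_pair (a b : α) : listProd P [a, b] = P.mul a b := by
  simp [listProd, P.mul_eps]

lemma listProd_append_congr (A B : List α) {X Y : List α} (h : listProd P X = listProd P Y) :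
    listProd P (A ++ X ++ B) = listProd P (A ++ Y ++ B) := by
  simp only [listProd_append, h]

lemma listProd_mono {L L' : List α} (h : List.Forall₂ P.le L L') {u' : α}
    (hu' : listProd P L' = some u') : ∃ u, listProd P L = some u ∧ P.le u u' := by
  induction h generalizing u' with
  | nil => exact ⟨u', hu', P.le_refl u'⟩
  | @cons a a' L L' hle _ ih =>
    obtain ⟨t', ht', hu'⟩ := Option.bind_eq_some_iff.1 hu'
    obtain ⟨t, ht, hlet⟩ := ih ht'
    simpa [listProd, ht] using P.mul_mono a a' t t' u' hle hlet hu'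

lemma listProdLe.of_forall₂ {L L' : List α} {c : α} (h : List.Forall₂ P.le L L')
    (hL' : listProdLe P L' c) : listProdLe P L c :=
  let ⟨_, hu', hle'⟩ := hL'
  let ⟨u, hu, hle⟩ := listProd_mono P h hu'
  ⟨u, hu, P.le_trans _ _ _ hle hle'⟩

lemma forall₂_le_append_singleton (A B : List α) {a b : α} (h : P.le a b) :
    List.Forall₂ P.le (A ++ [a] ++ B) (A ++ [b] ++ B) :=
  have hrefl : ∀ L : List α, List.Forall₂ P.le L L :=
    fun _ => List.forall₂_same.2 fun x _ => P.le_refl x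
  List.rel_append (List.rel_append (hrefl A) (List.Forall₂.cons h .nil)) (hrefl B)

lemma listProdLe.split {A B : List α} {m' m₁ m₂ c : α} (h : listProdLe P (A ++ m' :: B) c)
    (hm : P.mulLe m₁ m₂ m') : listProdLe P (A ++ m₁ :: m₂ :: B) c := by
  obtain ⟨t, ht, hle⟩ := hm
  have hprod : listProd P (A ++ m₁ :: m₂ :: B) = listProd P (A ++ t :: B) := by
    simpa using listProd_append_congr P A B (X := [m₁, m₂]) (Y := [t])
      (by rw [listProd_pair, ht]; simp [listProd, P.mul_eps])
  obtain ⟨u, hu, hule⟩ :=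
    listProdLe.of_forall₂ P (forall₂_le_append_singleton P A B hle) (by simpa using h)
  exact ⟨u, hprod.trans (by simpa using hu), hule⟩

lemma listProdLe.drop {A B : List α} {m' c : α} (h : listProdLe P (A ++ m' :: B) c)
    (hm : P.le P.eps m') : listProdLe P (A ++ B) c := by
  have hprod : listProd P (A ++ B) = listProd P (A ++ P.eps :: B) := by
    simpa using listProd_append_congr P A B (X := []) (Y := [P.eps])
      (by simp [listProd, P.mul_eps])
  obtain ⟨u, hu, hule⟩ :=
    listProdLe.of_forall₂ P (forall₂_le_append_singleton P A B hm) (by simpa using h)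
  exact ⟨u, hprod.trans (by simpa using hu), hule⟩

lemma listProdLe.cons_cons {a b c : α} {L : List α} (h : listProdLe P (a :: b :: L) c) :
    ∃ r, P.mul a b = some r ∧ listProdLe P (r :: L) c := by
  obtain ⟨x, hx, hle⟩ := h
  obtain ⟨r, y, hr, hy, hx⟩ := (listProd_append_eq_some P (A := [a, b])).1 hx
  rw [listProd_pair] at hr
  exact ⟨r, hr, x, by simp [listProd, hy, hx], hle⟩

end ListProd

section HeapTyping

variable {α : Type}

@[simp] lemma Heap.find_update_self (H : Heap α) (l : ℕ) (t : ℕ × α × α) :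
    (H.update l t).find l = some t := by
  simp [Heap.update]

@[simp] lemma Heap.find_update_of_ne (H : Heap α) {l l' : ℕ} (h : l' ≠ l) (t : ℕ × α × α) :
    (H.update l t).find l' = H.find l' := by
  simp [Heap.update, h]

lemma Heap.dom_update (H : Heap α) (l : ℕ) (t : ℕ × α × α) :
    (H.update l t).dom = insert l H.dom := by
  ext l'
  by_cases h : l' = l <;> simp [Heap.dom, h]

lemma labels_interpC (Γ : Ctx α) : (interpC Γ).labels = Γ.toList.filter fun b => !b.unrB :=
  GCtx.labels_interpG _ _

@[simp] lemma labels_focus_empty (l : ℕ) : (interpC (focus (.empty : Ctx α) l)).labels = [] :=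
  rfl

@[simp] lemma labels_focus_comma (Γ₁ Γ₂ : Ctx α) (l : ℕ) :
    (interpC (focus (.comma Γ₁ Γ₂) l)).labels =
      (interpC (focus Γ₁ l)).labels ++ (interpC (focus Γ₂ l)).labels :=
  Graph.labels_join _ _

@[simp] lemma labels_focus_bind_loc (l : ℕ) (m : α) :
    (interpC (focus (.bind (.loc l m)) l)).labels = [.loc l m] := by
  simp [labels_interpC, focus, GCtx.toList, Binding.unrB]

@[simp] lemma labels_focus_bind_loc_of_ne {l l' : ℕ} (h : l ≠ l') (m : α) :
    (interpC (focus (.bind (.loc l m)) l')).labels = [] := by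
  simp [labels_interpC, focus, GCtx.toList, h]

lemma isChain_focus_comma {Γ₁ Γ₂ : Ctx α} {l : ℕ} :
    (interpC (focus (.comma Γ₁ Γ₂) l)).IsChain ↔
      (interpC (focus Γ₁ l)).IsChain ∧ (interpC (focus Γ₂ l)).IsChain :=
  Graph.isChain_join

lemma focus_fill (G : CtxPat α) (l : ℕ) :
    ∃ G' : CtxPat α, ∀ Δ, focus (G.fill Δ) l = G'.fill (focus Δ l) := by
  induction G with
  | hole => exact ⟨.hole, fun _ => rfl⟩
  | commaL G Γ ih =>
    obtain ⟨G', h⟩ := ih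
    exact ⟨.commaL G' (focus Γ l), fun Δ => by simp [GPat.fill, focus, h]⟩
  | commaR Γ G ih =>
    obtain ⟨G', h⟩ := ih
    exact ⟨.commaR (focus Γ l) G', fun Δ => by simp [GPat.fill, focus, h]⟩
  | parL G Γ ih =>
    obtain ⟨G', h⟩ := ih
    exact ⟨.parL G' (focus Γ l), fun Δ => by simp [GPat.fill, focus, h]⟩
  | parR Γ G ih =>
    obtain ⟨G', h⟩ := ih
    exact ⟨.parR (focus Γ l) G', fun Δ => by simp [GPat.fill, focus, h]⟩

lemma labels_focus_fill (G : CtxPat α) (l : ℕ) :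
    ∃ A C, ∀ Δ,
      (interpC (focus (G.fill Δ) l)).labels = A ++ (interpC (focus Δ l)).labels ++ C := by
  obtain ⟨G', hG'⟩ := focus_fill G l
  obtain ⟨A, C, h⟩ := G'.labels_interpG_fill Binding.unrB
  exact ⟨A, C, fun Δ => by rw [interpC, hG']; exact h _⟩

lemma isChain_focus_fill (G : CtxPat α) {l : ℕ} {Δ Δ' : Ctx α}
    (hpos : 0 < (interpC (focus Δ' l)).n → 0 < (interpC (focus Δ l)).n)
    (hΔ' : (interpC (focus Δ' l)).IsChain) (h : (interpC (focus (G.fill Δ) l)).IsChain) :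
    (interpC (focus (G.fill Δ') l)).IsChain := by
  obtain ⟨G', hG'⟩ := focus_fill G l
  rw [interpC, hG'] at h ⊢
  exact G'.isChain_interpG_fill _ hpos hΔ' h

lemma ldom_fill (G : CtxPat α) (Δ : Ctx α) :
    ldom (G.fill Δ) = ldom (G.fill .empty) ∪ ldom Δ := by
  obtain ⟨A, C, h⟩ := G.toList_fill
  ext l
  simp only [ldom, h, GCtx.toList, Set.mem_setOf_eq, Set.mem_union, List.mem_append]
  grind

lemma ldom_fill_bind_loc (G : CtxPat α) (l : ℕ) (m : α) :
    ldom (G.fill (.bind (.loc l m))) = insert l (ldom (G.fill .empty)) := by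
  rw [ldom_fill, Set.union_comm, Set.insert_eq]
  exact congrArg (· ∪ _) (Set.ext fun _ => by simp [ldom, GCtx.toList])

lemma mem_ldom_iff_labels_ne_nil {Γ : Ctx α} (hΓ : isRuntime Γ) (l : ℕ) :
    l ∈ ldom Γ ↔ (interpC (focus Γ l)).labels ≠ [] := by
  induction Γ with
  | empty => simp [ldom, GCtx.toList]
  | bind b =>
    obtain ⟨l', m, rfl⟩ := hΓ b (by simp [GCtx.toList])
    by_cases h : l' = l
    · simp [ldom, GCtx.toList, h]
    · simp [ldom, GCtx.toList, h, Ne.symm h]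
  | comma Γ₁ Γ₂ ih₁ ih₂ | par Γ₁ Γ₂ ih₁ ih₂ =>
    have h₁ := ih₁ fun b hb => hΓ b (List.mem_append_left _ hb)
    have h₂ := ih₂ fun b hb => hΓ b (List.mem_append_right _ hb)
    simp only [ldom, Set.mem_setOf_eq, labels_interpC] at h₁ h₂ ⊢
    simp only [GCtx.toList, focus, List.mem_append, List.filter_append, ne_eq,
      List.append_eq_nil_iff, not_and_or, exists_or, h₁, h₂]

def CellTy (P : OPM α) (w : List (Binding α)) : ℕ × α × α → Prop
  | (n, m₀, m) => w.length = n + 1 ∧ listProdLe P (m :: w.map (bUsage P)) m₀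

variable {P : OPM α}

lemma focusUsage_iff {Γ : Ctx α} {l : ℕ} (hc : (interpC (focus Γ l)).IsChain) {u : α} :
    focusUsage P Γ l u ↔ listProd P ((interpC (focus Γ l)).labels.map (bUsage P)) = some u := by
  have htop : (interpC (focus Γ l)).TopOrdered := GCtx.topOrdered_interpG _ _
  constructor
  · rintro ⟨f, hf, hu⟩
    rw [hc.eq_one_of_isTopOrder hf] at hu
    simpa [Graph.labels, List.map_ofFn, Function.comp_def] using hu
  · intro hu
    refine ⟨1, htop.isTopOrder_one, ?_⟩
    simpa [Graph.labels, List.map_ofFn, Function.comp_def] using hu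

lemma heapTy_iff {C : Ctx α} {H : Heap α} :
    HeapTy P C H ↔ (∀ l, (interpC (focus C l)).IsChain) ∧ ldom C = H.dom ∧
      ∀ l t, H.find l = some t → CellTy P (interpC (focus C l)).labels t := by
  have htr : ∀ l, (interpC (focus C l)).Traceable ↔ (interpC (focus C l)).IsChain :=
    fun l => (GCtx.topOrdered_interpG _ _).traceable_iff
  simp only [HeapTy, orderDefined, htr]
  refine and_congr_right fun hc => and_congr_right fun _ => ?_
  simp only [CellTy, focusUsage_iff (hc _), Graph.length_labels, listProdLe, listProd,
    Option.bind_eq_some_iff, Prod.forall]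
  grind

lemma HeapTy.refill {G : CtxPat α} {Δ Δ' : Ctx α} {H H' : Heap α} {l : ℕ}
    (h : HeapTy P (G.fill Δ) H)
    (hΔ : ∀ l' ≠ l, (interpC (focus Δ l')).labels = [])
    (hΔ' : ∀ l' ≠ l, (interpC (focus Δ' l')).labels = [])
    (hfind : ∀ l' ≠ l, H'.find l' = H.find l')
    (hdom : ldom (G.fill Δ') = H'.dom)
    (hchain : (interpC (focus (G.fill Δ') l)).IsChain)
    (hcell : ∀ t, H'.find l = some t → CellTy P (interpC (focus (G.fill Δ') l)).labels t) :
    HeapTy P (G.fill Δ') H' := by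
  obtain ⟨hc, -, hcells⟩ := heapTy_iff.1 h
  have hsame : ∀ l' ≠ l, (interpC (focus (G.fill Δ') l')).labels =
      (interpC (focus (G.fill Δ) l')).labels := fun l' hl' => by
    obtain ⟨A, C, hAC⟩ := labels_focus_fill G l'
    rw [hAC, hAC, hΔ l' hl', hΔ' l' hl']
  refine heapTy_iff.2 ⟨fun l' => ?_, hdom, fun l' t ht => ?_⟩ <;>
    obtain rfl | hl' := eq_or_ne l' l
  · exact hchain
  · have hn : (interpC (focus Δ' l')).n = 0 := by simp [← Graph.length_labels, hΔ' l' hl']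
    exact isChain_focus_fill G (by omega) (Graph.isChain_of_n_le_one (by omega)) (hc l')
  · exact hcell t ht
  · rw [hsame l' hl']
    exact hcells l' t (hfind l' hl' ▸ ht)

theorem HeapTy.alloc {G : CtxPat α} {H : Heap α} {l : ℕ} {m : α}
    (hrt : isRuntime (G.fill .empty)) (h : HeapTy P (G.fill .empty) H) (hl : l ∉ H.dom) :
    HeapTy P (G.fill (.bind (.loc l m))) (H.update l (0, m, P.eps)) := by
  have hdom := (heapTy_iff.1 h).2.1
  obtain ⟨A, C, hAC⟩ := labels_focus_fill G l
  have hnil : A ++ C = [] := by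
    rw [← hdom, mem_ldom_iff_labels_ne_nil hrt, not_not, hAC] at hl
    simpa using hl
  have hlabels : (interpC (focus (G.fill (.bind (.loc l m))) l)).labels = [.loc l m] := by
    simp_all
  refine h.refill (fun _ _ => rfl) (fun l' hl' => by simp [Ne.symm hl'])
    (fun l' hl' => Heap.find_update_of_ne H hl' _)
    (by rw [ldom_fill_bind_loc, hdom, Heap.dom_update])
    (Graph.isChain_of_n_le_one (by simp [← Graph.length_labels, hlabels]))
    (fun t ht => ?_)
  cases (Heap.find_update_self H l _).symm.trans ht
  rw [hlabels]
  exact ⟨rfl, m, by simp [listProd, bUsage, P.mul_eps, P.eps_mul], P.le_refl m⟩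

theorem HeapTy.split {G : CtxPat α} {H : Heap α} {l n : ℕ} {m₀ m m' m₁ m₂ : α}
    (h : HeapTy P (G.fill (.bind (.loc l m'))) (H.update l (n, m₀, m)))
    (hm : P.mulLe m₁ m₂ m') :
    HeapTy P (G.fill (.comma (.bind (.loc l m₁)) (.bind (.loc l m₂))))
      (H.update l (n + 1, m₀, m)) := by
  obtain ⟨hc, hdom, hcells⟩ := heapTy_iff.1 h
  obtain ⟨A, C, hAC⟩ := labels_focus_fill G l
  obtain ⟨hlen, hprod⟩ : CellTy P (A ++ [.loc l m'] ++ C) (n, m₀, m) := by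
    simpa [hAC] using hcells l _ (Heap.find_update_self H l _)
  refine h.refill (fun l' hl' => by simp [Ne.symm hl']) (fun l' hl' => by simp [Ne.symm hl'])
    (fun l' hl' => by simp [hl'])
    (by
      rw [Heap.dom_update, ← Heap.dom_update H l (n, m₀, m), ← hdom, ldom_fill_bind_loc,
        ldom_fill, Set.union_comm, Set.insert_eq]
      exact congrArg (· ∪ _) (Set.ext fun _ => by simp [ldom, GCtx.toList, exists_or]))
    (isChain_focus_fill G (by simp [← Graph.length_labels])
      (isChain_focus_comma.2 ⟨Graph.isChain_of_n_le_one (by simp [← Graph.length_labels]),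
        Graph.isChain_of_n_le_one (by simp [← Graph.length_labels])⟩)
      (hc l))
    (fun t ht => ?_)
  cases (Heap.find_update_self H l _).symm.trans ht
  refine ⟨by simp [hAC] at hlen ⊢; omega, ?_⟩
  simpa [hAC, bUsage] using
    listProdLe.split P (A := m :: A.map (bUsage P)) (by simpa [bUsage] using hprod) hm

theorem HeapTy.op {C : Ctx α} {H : Heap α} {l n : ℕ} {m₀ m m' m₁ m₂ : α}
    (h : HeapTy P (.comma (.bind (.loc l m')) C) (H.update l (n, m₀, m)))
    (hm : P.mulLe m₁ m₂ m') :
    ∃ r, P.mul m m₁ = some r ∧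
      HeapTy P (.comma (.bind (.loc l m₂)) C) (H.update l (n, m₀, r)) := by
  obtain ⟨hc, hdom, hcells⟩ := heapTy_iff.1 h
  obtain ⟨hlen, hprod⟩ : CellTy P (.loc l m' :: (interpC (focus C l)).labels) (n, m₀, m) := by
    simpa using hcells l _ (Heap.find_update_self H l _)
  obtain ⟨r, hr, hprod'⟩ := listProdLe.cons_cons P (listProdLe.split P (A := [m]) hprod hm)
  refine ⟨r, hr, HeapTy.refill (G := .commaL .hole C) h
    (fun l' hl' => by simp [Ne.symm hl']) (fun l' hl' => by simp [Ne.symm hl'])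
    (fun l' hl' => by simp [hl'])
    (by
      rw [Heap.dom_update, ← Heap.dom_update H l (n, m₀, m), ← hdom]
      exact (ldom_fill_bind_loc (.commaL .hole C) l m₂).trans (ldom_fill_bind_loc _ l m').symm)
    (isChain_focus_fill (.commaL .hole C) (by simp [← Graph.length_labels])
      (Graph.isChain_of_n_le_one (by simp [← Graph.length_labels])) (hc l))
    (fun t ht => ?_)⟩
  cases (Heap.find_update_self H l _).symm.trans ht
  simp only [GPat.fill, labels_focus_comma, labels_focus_bind_loc]
  exact ⟨hlen, hprod'⟩

theorem HeapTy.drop {G : CtxPat α} {H : Heap α} {l n : ℕ} {m₀ m m' : α}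
    (hrt : isRuntime (G.fill .empty))
    (h : HeapTy P (G.fill (.bind (.loc l m'))) (H.update l (n + 1, m₀, m)))
    (hm : P.le P.eps m') :
    HeapTy P (G.fill .empty) (H.update l (n, m₀, m)) := by
  obtain ⟨hc, hdom, hcells⟩ := heapTy_iff.1 h
  obtain ⟨A, C, hAC⟩ := labels_focus_fill G l
  obtain ⟨hlen, hprod⟩ : CellTy P (A ++ [.loc l m'] ++ C) (n + 1, m₀, m) := by
    simpa [hAC] using hcells l _ (Heap.find_update_self H l _)
  have hempty : (interpC (focus (G.fill .empty) l)).labels = A ++ C := by simp [hAC]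
  have hl : l ∈ ldom (G.fill .empty) := by
    rw [mem_ldom_iff_labels_ne_nil hrt, hempty]
    intro hnil
    simp only [List.append_eq_nil_iff] at hnil
    simp [hnil] at hlen
  refine h.refill (fun l' hl' => by simp [Ne.symm hl']) (fun _ _ => rfl)
    (fun l' hl' => by simp [hl'])
    (by rw [Heap.dom_update, ← Heap.dom_update H l (n + 1, m₀, m), ← hdom, ldom_fill_bind_loc,
      Set.insert_eq_of_mem hl])
    (isChain_focus_fill G (by simp [← Graph.length_labels])
      (Graph.isChain_of_n_le_one (by simp [← Graph.length_labels])) (hc l))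
    (fun t ht => ?_)
  cases (Heap.find_update_self H l _).symm.trans ht
  rw [hempty]
  refine ⟨by simp at hlen ⊢; omega, ?_⟩
  simpa using listProdLe.drop P (A := m :: A.map (bUsage P)) (by simpa [bUsage] using hprod) hm

theorem HeapTy.dropLast {G : CtxPat α} {H : Heap α} {l : ℕ} {m₀ m m' : α}
    (hrt : isRuntime (G.fill .empty))
    (h : HeapTy P (G.fill (.bind (.loc l m'))) (H.update l (0, m₀, m)))
    (hl : l ∉ H.dom) :
    HeapTy P (G.fill .empty) H := by
  obtain ⟨hc, hdom, hcells⟩ := heapTy_iff.1 h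
  obtain ⟨A, C, hAC⟩ := labels_focus_fill G l
  have hlen : (A ++ [Binding.loc l m'] ++ C).length = 0 + 1 := by
    simpa [hAC] using (hcells l _ (Heap.find_update_self H l _)).1
  have hempty : (interpC (focus (G.fill .empty) l)).labels = [] := by
    simp only [List.length_append, List.length_singleton] at hlen
    simp only [hAC, labels_focus_empty, List.append_nil, ← List.length_eq_zero_iff,
      List.length_append]
    omega
  have hl' : l ∉ ldom (G.fill .empty) := by
    rw [mem_ldom_iff_labels_ne_nil hrt, hempty, ne_eq, not_not]
  refine h.refill (fun l' hl' => by simp [Ne.symm hl']) (fun _ _ => rfl)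
    (fun l' hl' => (Heap.find_update_of_ne H hl' _).symm)
    (by
      rw [Heap.dom_update, ldom_fill_bind_loc] at hdom
      rw [← Set.insert_diff_self_of_notMem hl', hdom, Set.insert_diff_self_of_notMem hl])
    (Graph.isChain_of_n_le_one (by simp [← Graph.length_labels, hempty]))
    (fun t ht => by simp_all [Heap.dom])

end HeapTyping

/-- **Heap tracking.** The five ways in which the heap typing judgment
tracks configuration reduction. -/
theorem heap_tracking {α : Type} (P : OPM α) :
    -- (1) allocation of a fresh resource
    (∀ (G : CtxPat α) (H : Heap α) (l : ℕ) (m : α),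
        isRuntime (GPat.fill G GCtx.empty) →
        HeapTy P (GPat.fill G GCtx.empty) H → l ∉ Heap.dom H →
        HeapTy P (GPat.fill G (GCtx.bind (Binding.loc l m)))
          (H.update l (0, m, P.eps))) ∧
    -- (2) splitting a resource
    (∀ (G : CtxPat α) (H : Heap α) (l n : ℕ) (m₀ m m' m₁ m₂ : α),
        isRuntime (GPat.fill G GCtx.empty) →
        HeapTy P (GPat.fill G (GCtx.bind (Binding.loc l m')))
          (H.update l (n, m₀, m)) →
        P.mulLe m₁ m₂ m' →
        HeapTy P (GPat.fill G (GCtx.comma (GCtx.bind (Binding.loc l m₁))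
          (GCtx.bind (Binding.loc l m₂)))) (H.update l (n + 1, m₀, m))) ∧
    -- (3) performing an operation
    (∀ (C : Ctx α) (H : Heap α) (l n : ℕ) (m₀ m m' m₁ m₂ : α),
        isRuntime C →
        HeapTy P (GCtx.comma (GCtx.bind (Binding.loc l m')) C)
          (H.update l (n, m₀, m)) →
        P.mulLe m₁ m₂ m' →
        ∃ r : α, P.mul m m₁ = some r ∧
          HeapTy P (GCtx.comma (GCtx.bind (Binding.loc l m₂)) C)
            (H.update l (n, m₀, r))) ∧
    -- (4) dropping an aliased resource
    (∀ (G : CtxPat α) (H : Heap α) (l n : ℕ) (m₀ m m' : α),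
        isRuntime (GPat.fill G GCtx.empty) →
        HeapTy P (GPat.fill G (GCtx.bind (Binding.loc l m')))
          (H.update l (n + 1, m₀, m)) →
        P.le P.eps m' →
        HeapTy P (GPat.fill G GCtx.empty) (H.update l (n, m₀, m))) ∧
    -- (5) dropping the last reference to a resource
    (∀ (G : CtxPat α) (H : Heap α) (l : ℕ) (m₀ m m' : α),
        isRuntime (GPat.fill G GCtx.empty) →
        HeapTy P (GPat.fill G (GCtx.bind (Binding.loc l m')))
          (H.update l (0, m₀, m)) →
        l ∉ Heap.dom H →
        HeapTy P (GPat.fill G GCtx.empty) H) :=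
  ⟨fun _ _ _ _ hrt h hl => h.alloc hrt hl,
    fun _ _ _ _ _ _ _ _ _ _ h hm => h.split hm,
    fun _ _ _ _ _ _ _ _ _ _ h hm => h.op hm,
    fun _ _ _ _ _ _ _ hrt h hm => h.drop hrt hm,
    fun _ _ _ _ _ _ hrt h hl => h.dropLast hrt hl⟩

end LawOrder
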